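/- Under the hypotheses of the LFR factorization with R proper, the subdiagonal entries of the Hessenberg matrix A satisfy a_{i+1,i} = q_{i+k+1,i+k} · r_{i+k,i} / conj(l_{i+1,i+k+1}) for i = 1, ..., n−1. Consequently a_{i+1,i} = 0 if and only if q_{i+k+1,i+k} = 0, i.e., A is proper (unreduced) if and only if Q̂ is proper. -/

import Mathlib

/-!
Since `Q + T Z Q = (1 + T Z) Q`, we have `Â = N Q R` with `N = L (1 + T Z)`, where `Z` consists of
the last `k` rows of `L`. The block structure of `T` and `Z` makes the first `k` columns of `N`
vanish, and `L Lᴴ = 1` gives `(N Lᴴ) i m = δ i m` for `m < n`. As `Lᴴ` has lower bandwidth `k`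
with nonzero outermost diagonal, forward substitution shows that row `i < n` of `N` vanishes to the
left of column `i + k`, and then `N i (i + k) * conj (L i (i + k)) = 1`. Since `Q R` has lower
bandwidth `k + 1`, the entry `Â (j + 1) j` reduces to
`N (j + 1) (j + k + 1) * Q (j + k + 1) (j + k) * R (j + k) j`.
-/

open scoped Matrix

namespace Matrix

variable {R : Type*} {s : ℕ}

theorem mul_apply_eq_single [NonUnitalNonAssocSemiring R] {A B : Matrix (Fin s) (Fin s) R}
    {i j c : Fin s} (hA : ∀ b, b < c → A i b = 0) (hB : ∀ b, c < b → B b j = 0) :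
    (A * B) i j = A i c * B c j := by
  rw [mul_apply]
  refine Finset.sum_eq_single c (fun b _ hbc => ?_) (by simp)
  rcases lt_or_gt_of_ne hbc with h | h
  · rw [hA b h, zero_mul]
  · rw [hB b h, mul_zero]

section LowerBand

variable [NonUnitalNonAssocSemiring R] {p q : ℕ} {A B : Matrix (Fin s) (Fin s) R}

theorem mul_apply_eq_zero_of_lowerBand (hA : ∀ i j : Fin s, (j : ℕ) + p < i → A i j = 0)
    (hB : ∀ i j : Fin s, (j : ℕ) + q < i → B i j = 0) {i j : Fin s} (hij : (j : ℕ) + q + p < i) :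
    (A * B) i j = 0 := by
  rw [mul_apply]
  refine Finset.sum_eq_zero fun d _ => ?_
  by_cases hd : (d : ℕ) + p < i
  · rw [hA i d hd, zero_mul]
  · rw [hB d j (by omega), mul_zero]

theorem mul_apply_eq_of_lowerBand (hA : ∀ i j : Fin s, (j : ℕ) + p < i → A i j = 0)
    (hB : ∀ i j : Fin s, (j : ℕ) + q < i → B i j = 0) {i c j : Fin s}
    (hc : (c : ℕ) = j + q) (hi : (i : ℕ) = c + p) :
    (A * B) i j = A i c * B c j :=
  mul_apply_eq_single (fun b hb => hA i b (by omega)) (fun b hb => hB b j (by omega))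

end LowerBand

theorem apply_eq_zero_of_mul_apply_eq_zero_of_lowerBand [Semiring R] [NoZeroDivisors R] {k : ℕ}
    {N B : Matrix (Fin s) (Fin s) R} (hB : ∀ b m : Fin s, (m : ℕ) + k < b → B b m = 0)
    (hBne : ∀ b m : Fin s, (b : ℕ) = m + k → B b m ≠ 0) {i : Fin s}
    (hN : ∀ a : Fin s, (a : ℕ) < k → N i a = 0) (horth : ∀ m : Fin s, m < i → (N * B) i m = 0) :
    ∀ a : Fin s, (a : ℕ) < i + k → N i a = 0 := by
  intro a
  induction a using WellFoundedLT.induction with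
  | _ a ih =>
    intro ha
    by_cases hak : (a : ℕ) < k
    · exact hN a hak
    set m : Fin s := ⟨a - k, by omega⟩
    have hm : (N * B) i m = N i a * B a m :=
      mul_apply_eq_single (fun b hb => ih b hb (by omega)) (fun b hb => hB b m (by simp [m]; omega))
    have h0 := horth m (by simp [Fin.lt_def, m]; omega)
    rw [hm] at h0
    exact (mul_eq_zero.mp h0).resolve_right (hBne a m (by simp [m]; omega))

section LFR

variable {K : Type*} [CommRing K] {n k : ℕ} {T : Matrix (Fin (n + k)) (Fin k) K}

theorem one_add_mul_apply_castLE_eq_zero {Tk : Matrix (Fin k) (Fin k) K} (hTk : IsUnit Tk.det)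
    {Z : Matrix (Fin k) (Fin (n + k)) K}
    (hTtop : ∀ i j : Fin k, T (Fin.castLE (Nat.le_add_left k n) i) j = Tk i j)
    (hTbot : ∀ i : Fin (n + k), k ≤ (i : ℕ) → ∀ j, T i j = 0)
    (hZ : ∀ i j : Fin k, Z i (Fin.castLE (Nat.le_add_left k n) j) = (-Tk⁻¹) i j)
    (d : Fin (n + k)) (a : Fin k) :
    (1 + T * Z : Matrix (Fin (n + k)) (Fin (n + k)) K) d (Fin.castLE (Nat.le_add_left k n) a) =
      0 := by
  rw [add_apply, mul_apply]
  by_cases hd : (d : ℕ) < k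
  · obtain ⟨d, rfl⟩ : ∃ d' : Fin k, Fin.castLE (Nat.le_add_left k n) d' = d := ⟨⟨d, hd⟩, rfl⟩
    simp only [hTtop, hZ]
    rw [← mul_apply, mul_neg, mul_nonsing_inv _ hTk]
    simp [one_apply, Fin.castLE_inj]
  · rw [one_apply_ne (by rintro rfl; simp at hd),
      Finset.sum_eq_zero fun c _ => by rw [hTbot d (by omega), zero_mul], add_zero]

theorem mul_one_add_mul_apply_eq_zero_of_lt {Tk : Matrix (Fin k) (Fin k) K} (hTk : IsUnit Tk.det)
    {Z : Matrix (Fin k) (Fin (n + k)) K}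
    (hTtop : ∀ i j : Fin k, T (Fin.castLE (Nat.le_add_left k n) i) j = Tk i j)
    (hTbot : ∀ i : Fin (n + k), k ≤ (i : ℕ) → ∀ j, T i j = 0)
    (hZ : ∀ i j : Fin k, Z i (Fin.castLE (Nat.le_add_left k n) j) = (-Tk⁻¹) i j)
    (L : Matrix (Fin (n + k)) (Fin (n + k)) K) (i a : Fin (n + k)) (ha : (a : ℕ) < k) :
    (L * (1 + T * Z) : Matrix (Fin (n + k)) (Fin (n + k)) K) i a = 0 := by
  obtain ⟨a, rfl⟩ : ∃ a' : Fin k, Fin.castLE (Nat.le_add_left k n) a' = a := ⟨⟨a, ha⟩, rfl⟩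
  rw [mul_apply]
  exact Finset.sum_eq_zero fun d _ => by
    rw [one_add_mul_apply_castLE_eq_zero hTk hTtop hTbot hZ, mul_zero]

variable [StarRing K] {L : Matrix (Fin (n + k)) (Fin (n + k)) K}

theorem mul_one_add_mul_submatrix_conjTranspose_apply_of_lt (hL : L * Lᴴ = 1) (i m : Fin (n + k))
    (hm : (m : ℕ) < n) :
    (L * (1 + T * L.submatrix (Fin.natAdd n) id) * Lᴴ : Matrix (Fin (n + k)) (Fin (n + k)) K) i m =
      (1 : Matrix _ _ K) i m := by
  have hZ : ∀ c, (L.submatrix (Fin.natAdd n) id * Lᴴ) c m = 0 := fun c => by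
    change (L * Lᴴ) (Fin.natAdd n c) m = 0
    rw [hL, one_apply_ne]
    rintro rfl
    simp at hm
  have hassoc : L * (T * L.submatrix (Fin.natAdd n) id) * Lᴴ =
      L * T * (L.submatrix (Fin.natAdd n) id * Lᴴ) := by
    simp only [Matrix.mul_assoc]
  rw [Matrix.mul_add, Matrix.add_mul, Matrix.mul_one, hL, add_apply, hassoc, mul_apply]
  simp [hZ]

theorem mul_one_add_mul_submatrix_apply_eq_zero_of_lt_add [IsDomain K]
    {Tk : Matrix (Fin k) (Fin k) K}
    (hL : L * Lᴴ = 1) (hLhess : ∀ i j : Fin (n + k), (i : ℕ) + k < (j : ℕ) → L i j = 0)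
    (hLprop : ∀ i j : Fin (n + k), (j : ℕ) = (i : ℕ) + k → L i j ≠ 0) (hTk : IsUnit Tk.det)
    (hTtop : ∀ i j : Fin k, T (Fin.castLE (Nat.le_add_left k n) i) j = Tk i j)
    (hTbot : ∀ i : Fin (n + k), k ≤ (i : ℕ) → ∀ j, T i j = 0)
    (hLbot : ∀ i j : Fin k, L (Fin.natAdd n i) (Fin.castLE (Nat.le_add_left k n) j) = (-Tk⁻¹) i j)
    {i : Fin (n + k)} (hi : (i : ℕ) < n) (a : Fin (n + k)) (ha : (a : ℕ) < i + k) :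
    (L * (1 + T * L.submatrix (Fin.natAdd n) id) : Matrix (Fin (n + k)) (Fin (n + k)) K) i a = 0 :=
  apply_eq_zero_of_mul_apply_eq_zero_of_lowerBand (B := Lᴴ)
    (fun b m h => by rw [conjTranspose_apply, hLhess m b h, star_zero])
    (fun b m h => by rw [conjTranspose_apply]; exact star_ne_zero.mpr (hLprop m b h))
    (mul_one_add_mul_apply_eq_zero_of_lt (Z := L.submatrix (Fin.natAdd n) id) hTk hTtop hTbot
      hLbot L i)
    (fun m hm => by
      rw [mul_one_add_mul_submatrix_conjTranspose_apply_of_lt hL i m ((Fin.lt_def.mp hm).trans hi),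
        one_apply_ne hm.ne']) a ha

end LFR

end Matrix

theorem stmt_13 {n k : ℕ}
    (L R Q : Matrix (Fin (n + k)) (Fin (n + k)) ℂ)
    (hL : L ∈ Matrix.unitaryGroup (Fin (n + k)) ℂ)
    (hLhess : ∀ i j : Fin (n + k), (i : ℕ) + k < (j : ℕ) → L i j = 0)
    (hLprop : ∀ i j : Fin (n + k), (j : ℕ) = (i : ℕ) + k → L i j ≠ 0)
    (hRhess : ∀ i j : Fin (n + k), (j : ℕ) + k < (i : ℕ) → R i j = 0)
    (hQhess : ∀ i j : Fin (n + k), (j : ℕ) + 1 < (i : ℕ) → Q i j = 0)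
    (Tk : Matrix (Fin k) (Fin k) ℂ)
    (hTkUnit : IsUnit Tk.det)
    (T : Matrix (Fin (n + k)) (Fin k) ℂ)
    (hTtop : ∀ i j : Fin k, T (Fin.castLE (Nat.le_add_left k n) i) j = Tk i j)
    (hTbot : ∀ i : Fin (n + k), k ≤ (i : ℕ) → ∀ j, T i j = 0)
    (hLbot : ∀ i j : Fin k, L ⟨n + (i : ℕ), by have := i.isLt; omega⟩ (Fin.castLE (Nat.le_add_left k n) j) = (-Tk⁻¹) i j)
    (hRprop : ∀ i j : Fin (n + k), (i : ℕ) = (j : ℕ) + k → R i j ≠ 0) :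
    ∀ Ahat : Matrix (Fin (n + k)) (Fin (n + k)) ℂ,
      Ahat = L * (Q + T * ((Matrix.of fun (i : Fin k) (j : Fin (n + k)) => L ⟨n + (i : ℕ), by have := i.isLt; omega⟩ j) * Q)) * R →
      ∀ (j : ℕ) (hj : j + 1 < n),
        Ahat ⟨j + 1, by omega⟩ ⟨j, by omega⟩ =
          Q ⟨j + k + 1, by omega⟩ ⟨j + k, by omega⟩ * R ⟨j + k, by omega⟩ ⟨j, by omega⟩ /
            (starRingEnd ℂ) (L ⟨j + 1, by omega⟩ ⟨j + k + 1, by omega⟩) ∧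
        (Ahat ⟨j + 1, by omega⟩ ⟨j, by omega⟩ = 0 ↔ Q ⟨j + k + 1, by omega⟩ ⟨j + k, by omega⟩ = 0) := by
  intro Ahat hAhat j hj
  set N : Matrix (Fin (n + k)) (Fin (n + k)) ℂ := L * (1 + T * L.submatrix (Fin.natAdd n) id)
  have hAN : Ahat = N * (Q * R) := by
    rw [hAhat]
    change L * (Q + T * (L.submatrix (Fin.natAdd n) id * Q)) * R = _
    simp only [N, Matrix.mul_add, Matrix.add_mul, Matrix.one_mul, Matrix.mul_assoc]
  set i : Fin (n + k) := ⟨j + 1, by omega⟩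
  set c : Fin (n + k) := ⟨j + k + 1, by omega⟩
  set d : Fin (n + k) := ⟨j + k, by omega⟩
  have hLL : L * Lᴴ = 1 := Matrix.mem_unitaryGroup_iff.mp hL
  have hNzero : ∀ b, b < c → N i b = 0 := fun b hb =>
    Matrix.mul_one_add_mul_submatrix_apply_eq_zero_of_lt_add hLL hLhess hLprop hTkUnit hTtop
      hTbot hLbot
      (show (i : ℕ) < n by simp [i]; omega) b (by simp [i, c, Fin.lt_def] at hb ⊢; omega)
  have hNdiag : N i c * star (L i c) = 1 := by
    have h := Matrix.mul_one_add_mul_submatrix_conjTranspose_apply_of_lt hLL (T := T) i i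
      (by simp [i]; omega)
    rwa [Matrix.mul_apply_eq_single hNzero (fun b hb => by
        rw [Matrix.conjTranspose_apply, hLhess _ _ (by simp [i, c, Fin.lt_def] at hb ⊢; omega),
          star_zero]), Matrix.one_apply_eq, Matrix.conjTranspose_apply] at h
  have hentry : Ahat i ⟨j, by omega⟩ = N i c * (Q c d * R d ⟨j, by omega⟩) := by
    rw [hAN, Matrix.mul_apply_eq_single hNzero (fun b hb =>
        Matrix.mul_apply_eq_zero_of_lowerBand hQhess hRhess
          (by simp [c, Fin.lt_def] at hb ⊢; omega)),
      Matrix.mul_apply_eq_of_lowerBand hQhess hRhess (c := d) rfl rfl]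
  have hLne : star (L i c) ≠ 0 := star_ne_zero.mpr (hLprop i c (by simp [i, c]; omega))
  refine ⟨?_, ?_⟩
  · rw [hentry, starRingEnd_apply, eq_div_iff hLne]
    linear_combination (Q c d * R d ⟨j, by omega⟩) * hNdiag
  · rw [hentry, mul_eq_zero, mul_eq_zero]
    simp [left_ne_zero_of_mul_eq_one hNdiag, hRprop d ⟨j, by omega⟩ rfl]
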